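/- Fix a prime p. For every formal power series f ∈ ℚ[[t]] with zero constant term, ℒ_p(ℰ_p(f)) = f. -/

import Mathlib

/-!
Substituting `t ↦ t^n` commutes with `exp`, and `log ∘ exp = id` (both sides have constant term
`0` and the same derivative), so `ℒ_p(ℰ_p f) = ∑_n (μ_p(n)/n)·S(t^n)` with
`S = ∑_m (1_p(m)/m)·f(t^m)`. On coefficients, `g ↦ ∑_n a(n)·g(t^n)` is Dirichlet convolution
with `a`, and dividing by `n` commutes with convolution, so everything reduces to
`μ_p ⋆ 1_p = ε`. Both factors are multiplicative; at a prime `q ≠ p` the identity is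
`μ ⋆ 1 = ε`, and at `p`, using `μ_p(m·p^s) = μ(m)·φ(p^s)`, it is
`φ(p^(k+1)) + (1 - p)·∑_{i ≤ k} φ(p^i) = p^k(p - 1) + (1 - p)·p^k = 0`.
-/

open PowerSeries

/-- The function `1_p : ℕ → ℤ`: `1_p(n) = 1` if `p ∤ n`, and `1_p(n) = 1 - p` if `p ∣ n`. -/
def onep (p n : ℕ) : ℤ := if p ∣ n then 1 - (p : ℤ) else 1

/-- The function `μ_p : ℕ → ℤ`: `μ_p(n) = μ(n)` if `p ∤ n`, and
`μ_p(n) = μ(m)·(p^s − p^{s−1})` if `n = m·p^s` with `p ∤ m` and `s ≥ 1`. -/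
def mup (p n : ℕ) : ℤ :=
  if p ∣ n then
    (ArithmeticFunction.moebius (n / p ^ (n.factorization p))) *
      ((p : ℤ) ^ (n.factorization p) - (p : ℤ) ^ (n.factorization p - 1))
  else ArithmeticFunction.moebius n

/-- Substitution of `t^m` for `t` in a formal power series: `(substPow m f) = f(t^m)`. -/
noncomputable def substPow (m : ℕ) (f : PowerSeries ℚ) : PowerSeries ℚ :=
  PowerSeries.mk fun n => if m ∣ n then PowerSeries.coeff (n / m) f else 0

/-- The coefficientwise sum `∑_{m=1}^∞ g m` of a family of power series in which the
`m`-th member has order `≥ m`. -/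
noncomputable def seriesSum (g : ℕ → PowerSeries ℚ) : PowerSeries ℚ :=
  PowerSeries.mk fun n => ∑ m ∈ Finset.Icc 1 n, PowerSeries.coeff n (g m)

/-- Formal exponential `exp(h) = ∑_{k≥0} h^k / k!` of a power series `h` with zero
constant term. -/
noncomputable def expS (h : PowerSeries ℚ) : PowerSeries ℚ :=
  PowerSeries.mk fun n =>
    ∑ k ∈ Finset.range (n + 1), (Nat.factorial k : ℚ)⁻¹ * PowerSeries.coeff n (h ^ k)

/-- Formal logarithm `log(1 + h) = ∑_{k≥1} (−1)^{k+1} h^k / k` for a power series `h`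
with zero constant term. -/
noncomputable def logS (h : PowerSeries ℚ) : PowerSeries ℚ :=
  PowerSeries.mk fun n =>
    ∑ k ∈ Finset.Icc 1 n, ((-1 : ℚ) ^ (k + 1) / k) * PowerSeries.coeff n (h ^ k)

/-- The operator `ℰ_p(f) = exp(∑_{m=1}^∞ (1_p(m)/m)·f(t^m))`. -/
noncomputable def calEp (p : ℕ) (f : PowerSeries ℚ) : PowerSeries ℚ :=
  expS (seriesSum fun m => ((onep p m : ℚ) / m) • substPow m f)

/-- The operator `ℒ_p(g) = ∑_{n=1}^∞ (μ_p(n)/n)·log g(t^n)`. -/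
noncomputable def calLp (p : ℕ) (g : PowerSeries ℚ) : PowerSeries ℚ :=
  seriesSum fun n => ((mup p n : ℚ) / n) • logS (substPow n g - 1)

namespace PowerSeries

theorem coeff_pow_eq_zero_of_lt {R : Type*} [CommRing R] {h : R⟦X⟧} (hh : constantCoeff h = 0)
    {k n : ℕ} (hn : n < k) : coeff n (h ^ k) = 0 :=
  X_pow_dvd_iff.mp (pow_dvd_pow_of_dvd (X_dvd_iff.mpr hh) k) n hn

theorem coeff_subst_eq_sum_range {R : Type*} [CommRing R] {h : R⟦X⟧}
    (hh : constantCoeff h = 0) (φ : R⟦X⟧) (n : ℕ) :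
    coeff n (φ.subst h) = ∑ k ∈ Finset.range (n + 1), coeff k φ * coeff n (h ^ k) := by
  rw [coeff_subst' (.of_constantCoeff_zero' hh)]
  refine finsum_eq_sum_of_support_subset _ fun k hk => ?_
  by_contra hkn
  rw [Finset.mem_coe, Finset.mem_range, not_lt] at hkn
  exact hk (by simp [coeff_pow_eq_zero_of_lt hh hkn])

theorem log_subst_exp_sub_one {A : Type*} [CommRing A] [Algebra ℚ A] :
    (log A).subst (exp A - 1) = X := by
  have : IsAddTorsionFree A := .of_module_rat A
  have hE : HasSubst (exp A - 1) := .exp_sub_one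
  have hgeom : (mk fun n ↦ algebraMap ℚ A ((-1 : ℚ) ^ n)) * (1 + X) = 1 := by
    ext (_ | n) <;> simp [mul_add, coeff_succ_mul_X, pow_succ]
  have hsubst : (1 + X : A⟦X⟧).subst (exp A - 1) = exp A := by
    rw [← coe_substAlgHom hE, map_add, map_one, coe_substAlgHom hE, subst_X hE, add_sub_cancel]
  apply derivative.ext
  · rw [derivative_subst hE, deriv_log, map_sub, derivative_one, sub_zero, derivative_exp,
      derivative_X]
    nth_rw 2 [← hsubst]
    rw [← subst_mul hE, hgeom, ← coe_substAlgHom hE, map_one]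
  · rw [constantCoeff_X]; exact constantCoeff_logOf constantCoeff_exp
end PowerSeries

theorem substPow_eq_expand {m : ℕ} (hm : m ≠ 0) (f : ℚ⟦X⟧) :
    substPow m f = expand m hm f := by
  ext n
  rw [substPow, coeff_mk, coeff_expand]

theorem expS_eq_subst {h : ℚ⟦X⟧} (hh : constantCoeff h = 0) : expS h = (exp ℚ).subst h := by
  ext n
  simp [expS, coeff_subst_eq_sum_range hh, coeff_exp]

theorem logS_eq_subst {h : ℚ⟦X⟧} (hh : constantCoeff h = 0) : logS h = (log ℚ).subst h := by
  ext n
  rw [logS, coeff_mk, coeff_subst_eq_sum_range hh]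
  refine Finset.sum_subset_zero_on_sdiff (fun k hk => ?_) (fun k hk => ?_) (fun k hk => ?_)
  · simp only [Finset.mem_Icc, Finset.mem_range] at hk ⊢
    omega
  · obtain rfl : k = 0 := by
      simp only [Finset.mem_sdiff, Finset.mem_Icc, Finset.mem_range] at hk
      omega
    simp
  · simp [Nat.one_le_iff_ne_zero.mp (Finset.mem_Icc.mp hk).1]

theorem logS_expS_sub_one {h : ℚ⟦X⟧} (hh : constantCoeff h = 0) : logS (expS h - 1) = h := by
  have hH : HasSubst h := .of_constantCoeff_zero' hh
  have hexp : expS h - 1 = (exp ℚ - 1).subst h := by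
    rw [expS_eq_subst hh, subst_sub hH, ← coe_substAlgHom hH, map_one]
  rw [hexp, logS_eq_subst (constantCoeff_subst_eq_zero hh _ (by simp)),
    ← subst_comp_subst_apply .exp_sub_one hH, log_subst_exp_sub_one, subst_X hH]

theorem substPow_expS {n : ℕ} (hn : n ≠ 0) {h : ℚ⟦X⟧} (hh : constantCoeff h = 0) :
    substPow n (expS h) = expS (substPow n h) := by
  rw [substPow_eq_expand hn, substPow_eq_expand hn, expS_eq_subst hh,
    expS_eq_subst (by rw [constantCoeff_expand, hh]), expand_apply, expand_apply,
    subst_comp_subst_apply (.of_constantCoeff_zero' hh) (.X_pow hn)]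

open ArithmeticFunction
open scoped ArithmeticFunction.Moebius Nat

namespace ArithmeticFunction

theorem pdiv_id_mul_pdiv_id {R : Type*} [Field R] (F G : ArithmeticFunction R) :
    F.pdiv ↑ArithmeticFunction.id * G.pdiv ↑ArithmeticFunction.id =
      (F * G).pdiv ↑ArithmeticFunction.id := by
  ext n
  simp only [mul_apply, pdiv_apply, natCoe_apply, id_apply, Finset.sum_div]
  refine Finset.sum_congr rfl fun x hx => ?_
  rw [div_mul_div_comm, ← Nat.cast_mul, (Nat.mem_divisorsAntidiagonal.mp hx).1]

theorem one_pdiv_id {R : Type*} [Field R] :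
    (1 : ArithmeticFunction R).pdiv ↑ArithmeticFunction.id = 1 := by
  ext n
  rw [pdiv_apply, natCoe_apply, id_apply, one_apply]
  split_ifs with h <;> simp [h]

end ArithmeticFunction

theorem Nat.sum_range_totient_prime_pow {p : ℕ} (hp : p.Prime) (k : ℕ) :
    ∑ i ∈ Finset.range (k + 1), φ (p ^ i) = p ^ k := by
  rw [← Nat.sum_divisors_prime_pow hp, Nat.sum_totient]

theorem seriesSum_congr {g g' : ℕ → ℚ⟦X⟧} (h : ∀ n ≠ 0, g n = g' n) :
    seriesSum g = seriesSum g' := by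
  ext N
  rw [seriesSum, seriesSum, coeff_mk, coeff_mk]
  refine Finset.sum_congr rfl fun n hn => ?_
  rw [h n (Nat.one_le_iff_ne_zero.mp (Finset.mem_Icc.mp hn).1)]

theorem seriesSum_smul_substPow (a F : ArithmeticFunction ℚ) :
    seriesSum (fun n => a n • substPow n (mk F)) = mk ⇑(a * F) := by
  ext N
  rw [seriesSum, coeff_mk, coeff_mk, mul_apply,
    Nat.sum_divisorsAntidiagonal (fun x y => a x * F y)]
  simp only [map_smul, substPow, coeff_mk, smul_eq_mul, mul_ite, mul_zero]
  rw [← Finset.sum_filter, ← Finset.Ico_add_one_right_eq_Icc]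
  rfl

theorem mup_zero (p : ℕ) : mup p 0 = 0 := by
  simp [mup]

section

variable {p : ℕ}

theorem mup_eq_moebius_mul_totient (hp : p.Prime) (n : ℕ) :
    mup p n = μ (ordCompl[p] n) * φ (ordProj[p] n) := by
  rcases eq_or_ne n 0 with rfl | hn
  · simp [mup_zero]
  unfold mup
  split_ifs with h
  · obtain ⟨j, hj⟩ := Nat.exists_eq_add_of_lt (hp.factorization_pos_of_dvd hn h)
    rw [zero_add] at hj
    rw [hj, Nat.totient_prime_pow_succ hp, Nat.add_sub_cancel]
    push_cast [Nat.cast_sub hp.one_le]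
    ring
  · simp [Nat.factorization_eq_zero_of_not_dvd h]

def mupArith (p : ℕ) : ArithmeticFunction ℤ := ⟨mup p, mup_zero p⟩

/-- `onep p 0 = 1 - p`, so the value at `0` has to be reset to `0`. -/
def onepArith (p : ℕ) : ArithmeticFunction ℤ :=
  ⟨fun n => if n = 0 then 0 else onep p n, rfl⟩

theorem mupArith_apply (p n : ℕ) : mupArith p n = mup p n := rfl

theorem onepArith_apply (p : ℕ) {n : ℕ} (hn : n ≠ 0) : onepArith p n = onep p n := if_neg hn

theorem isMultiplicative_mupArith (hp : p.Prime) : (mupArith p).IsMultiplicative := by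
  refine IsMultiplicative.iff_ne_zero.mpr
    ⟨by simp [mupArith_apply, mup_eq_moebius_mul_totient hp], fun {m n} hm hn hmn => ?_⟩
  simp only [mupArith_apply, mup_eq_moebius_mul_totient hp]
  rw [Nat.ordCompl_mul, Nat.ordProj_mul p hm hn]
  rw [isMultiplicative_moebius.map_mul_of_coprime
      (hmn.of_dvd (Nat.ordCompl_dvd m p) (Nat.ordCompl_dvd n p)),
    Nat.totient_mul (hmn.of_dvd (Nat.ordProj_dvd m p) (Nat.ordProj_dvd n p))]
  push_cast
  ring

theorem isMultiplicative_onepArith (hp : p.Prime) : (onepArith p).IsMultiplicative := by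
  refine IsMultiplicative.iff_ne_zero.mpr ⟨?_, fun {m n} hm hn hmn => ?_⟩
  · simp [onepArith_apply, onep, hp.ne_one]
  rw [onepArith_apply p (mul_ne_zero hm hn), onepArith_apply p hm, onepArith_apply p hn]
  unfold onep
  by_cases hpm : p ∣ m <;> by_cases hpn : p ∣ n
  · exact absurd (Nat.dvd_one.mp (hmn ▸ Nat.dvd_gcd hpm hpn)) hp.ne_one
  all_goals simp [hpm, hpn, hp.dvd_mul]

theorem mupArith_mul_onepArith_apply_of_not_dvd {n : ℕ} (hn : ¬ p ∣ n) :
    (mupArith p * onepArith p) n = (1 : ArithmeticFunction ℤ) n := by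
  rw [← moebius_mul_coe_zeta, mul_apply, mul_apply]
  refine Finset.sum_congr rfl fun x hx => ?_
  obtain ⟨hx, hn0⟩ := Nat.mem_divisorsAntidiagonal.mp hx
  have hx1 : ¬ p ∣ x.1 := fun h => hn (hx ▸ h.mul_right x.2)
  have hx2 : ¬ p ∣ x.2 := fun h => hn (hx ▸ h.mul_left x.1)
  rw [mupArith_apply, mup, if_neg hx1, onepArith_apply p (right_ne_zero_of_mul (hx ▸ hn0)),
    onep, if_neg hx2, natCoe_apply, zeta_apply, if_neg (right_ne_zero_of_mul (hx ▸ hn0))]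
  simp

theorem mup_prime_pow (hp : p.Prime) (i : ℕ) : mup p (p ^ i) = φ (p ^ i) := by
  simp [mup_eq_moebius_mul_totient hp, hp.factorization_pow, Nat.div_self (pow_pos hp.pos i)]

theorem mupArith_mul_onepArith_apply_prime_pow (hp : p.Prime) (k : ℕ) :
    (mupArith p * onepArith p) (p ^ (k + 1)) = 0 := by
  rw [mul_apply, Nat.sum_divisorsAntidiagonal (fun x y => mupArith p x * onepArith p y),
    Nat.sum_divisors_prime_pow hp, Finset.sum_range_succ, Nat.div_self (pow_pos hp.pos _),
    onepArith_apply p one_ne_zero, onep, if_neg (mt Nat.dvd_one.mp hp.ne_one), mul_one]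
  have hcofactor : ∀ i ∈ Finset.range (k + 1), onepArith p (p ^ (k + 1) / p ^ i) = 1 - p := by
    intro i hi
    have hik : i < k + 1 := Finset.mem_range.mp hi
    rw [Nat.pow_div hik.le hp.pos, onepArith_apply p (pow_ne_zero _ hp.ne_zero), onep,
      if_pos (dvd_pow_self p (Nat.sub_ne_zero_of_lt hik))]
  rw [Finset.sum_congr rfl fun i hi => by rw [hcofactor i hi], ← Finset.sum_mul]
  simp only [mupArith_apply, mup_prime_pow hp]
  rw [← Nat.cast_sum, Nat.sum_range_totient_prime_pow hp, Nat.totient_prime_pow_succ hp]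
  push_cast [Nat.cast_sub hp.one_le]
  ring

theorem mupArith_mul_onepArith (hp : p.Prime) : mupArith p * onepArith p = 1 := by
  refine (IsMultiplicative.eq_iff_eq_on_prime_powers _
    ((isMultiplicative_mupArith hp).mul (isMultiplicative_onepArith hp)) _
    isMultiplicative_one).mpr fun q k hq => ?_
  rcases eq_or_ne q p with rfl | hqp
  · cases k with
    | zero => simp [((isMultiplicative_mupArith hp).mul (isMultiplicative_onepArith hp)).map_one]
    | succ k =>
      rw [mupArith_mul_onepArith_apply_prime_pow hp,
        one_apply_ne (Nat.one_lt_pow k.succ_ne_zero hq.one_lt).ne']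
  · exact mupArith_mul_onepArith_apply_of_not_dvd fun h =>
      hqp ((Nat.prime_dvd_prime_iff_eq hp hq).mp (hp.dvd_of_dvd_pow h)).symm

end

/-- Fix a prime `p`. For every formal power series `f ∈ ℚ[[t]]` with zero constant term,
`ℒ_p(ℰ_p(f)) = f`. -/
theorem calLp_calEp (p : ℕ) (hp : p.Prime) (f : PowerSeries ℚ)
    (hf : PowerSeries.constantCoeff f = 0) : calLp p (calEp p f) = f := by
  let a : ArithmeticFunction ℚ :=
    (mupArith p : ArithmeticFunction ℚ).pdiv ↑ArithmeticFunction.id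
  let b : ArithmeticFunction ℚ :=
    (onepArith p : ArithmeticFunction ℚ).pdiv ↑ArithmeticFunction.id
  let c : ArithmeticFunction ℚ := ⟨fun n => coeff n f, by simpa using hf⟩
  have hfc : f = mk c := by ext; simp [c]
  have hab : a * b = 1 := by
    rw [pdiv_id_mul_pdiv_id, ← intCoe_mul, mupArith_mul_onepArith hp, intCoe_one, one_pdiv_id]
  have hS : (seriesSum fun m => ((onep p m : ℚ) / m) • substPow m f) = mk ⇑(b * c) := by
    rw [← seriesSum_smul_substPow, hfc]
    exact seriesSum_congr fun m hm => by simp [b, onepArith_apply p hm]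
  calc calLp p (calEp p f) = seriesSum fun n => a n • substPow n (mk ⇑(b * c)) := by
        refine seriesSum_congr fun n hn => ?_
        rw [calEp, hS, substPow_expS hn (by simp),
          logS_expS_sub_one (by simp [substPow_eq_expand hn])]
        simp [a, mupArith_apply]
    _ = mk ⇑(a * (b * c)) := seriesSum_smul_substPow a _
    _ = f := by rw [← mul_assoc, hab, one_mul, hfc]
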